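/- (Adjointness of the boundary-to-boundary map, 1D form.) Let a < c < d < b, ε > 0, σ : [a,b] → ℝ continuous, and let L w(x,v) = (1/2)∫_{−1}^{1} w(x,v′) dv′ − w(x,v). Let u : [a,b]×[−1,1] → ℝ, g : [c,d]×[−1,1] → ℝ, and h : ([a,c] ∪ [d,b])×[−1,1] → ℝ be continuous, continuously differentiable in x with jointly continuous x-derivatives on their domains, and let ψ : [−1,1] → ℝ. Assume: (i) v ∂ₓu = (σ/ε) Lu on [a,b]×[−1,1]; (ii) −v ∂ₓg = (σ/ε) Lg on [c,d]×[−1,1] with g(d,v) = ψ(v) + h(d,v) for v ∈ (0,1) and g(c,v) = ψ(v) + h(c,v) for v ∈ (−1,0); (iii) −v ∂ₓh = (σ/ε) Lh on [a,c]×[−1,1] and on [d,b]×[−1,1], with h(c,v) = g(c,v) for v ∈ (0,1), h(d,v) = g(d,v) for v ∈ (−1,0), h(a,v) = 0 for v ∈ (−1,0), and h(b,v) = 0 for v ∈ (0,1). Then ∫_0^1 v u(d,v) ψ(v) dv + ∫_{−1}^0 |v| u(c,v) ψ(v) dv = ∫_0^1 v u(a,v) h(a,v) dv + ∫_{−1}^0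 |v| u(b,v) h(b,v) dv. -/

import Mathlib

/-!
If `v ∂ₓu = κ L u` and `-v ∂ₓw = κ L w`, then `∂ₓ(v u w) = κ (Lu · w - u · Lw)`, whose integral
over `v ∈ [-1, 1]` vanishes because `L` is symmetric. So the flux `∫ v u w dv` is the same at both
ends of an interval: the pairing of `u` and `w` on the outflow boundary equals the one on the
inflow boundary. Applying this to `(u, g)` on `[c, d]` and to `(u, h)` on `[a, c]` and `[d, b]`,
the coupling conditions cancel the pairings of `u` with `g` and `h` at `c` and `d`, which leaves
`ψ = g - h` on `Γ^s_{m,+}` paired against `h` on `Γ_{m,-}`.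
-/

open MeasureTheory Set Function intervalIntegral

theorem intervalIntegral_integral_swap_of_continuousOn {p q s t : ℝ} (hpq : p ≤ q) (hst : s ≤ t)
    {F : ℝ → ℝ → ℝ} (hF : ContinuousOn (uncurry F) (Icc p q ×ˢ Icc s t)) :
    ∫ v in s..t, ∫ x in p..q, F x v = ∫ x in p..q, ∫ v in s..t, F x v := by
  have hint : Integrable (uncurry F)
      ((volume.restrict (Ioc p q)).prod (volume.restrict (Ioc s t))) := by
    rw [Measure.prod_restrict]
    exact (hF.integrableOn_compact (isCompact_Icc.prod isCompact_Icc)).mono_set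
      (prod_mono Ioc_subset_Icc_self Ioc_subset_Icc_self)
  simp only [integral_of_le hpq, integral_of_le hst]
  exact (integral_integral_swap hint).symm

theorem integral_eq_of_integral_partialDeriv_eq_zero {p q s t : ℝ} (hpq : p ≤ q) (hst : s ≤ t)
    {F D : ℝ → ℝ → ℝ} (hFp : IntervalIntegrable (F p) volume s t)
    (hFq : IntervalIntegrable (F q) volume s t)
    (hFD : ∀ x ∈ Icc p q, ∀ v ∈ Icc s t, HasDerivWithinAt (F · v) (D x v) (Icc p q) x)
    (hD : ContinuousOn (uncurry D) (Icc p q ×ˢ Icc s t))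
    (hD_zero : ∀ x ∈ Icc p q, ∫ v in s..t, D x v = 0) :
    ∫ v in s..t, F q v = ∫ v in s..t, F p v := by
  have ftc : ∀ v ∈ Icc s t, ∫ x in p..q, D x v = F q v - F p v := fun v hv =>
    integral_eq_sub_of_hasDeriv_right_of_le hpq
      (fun x hx => (hFD x hx v hv).continuousWithinAt)
      (fun x hx => ((hFD x (Ioo_subset_Icc_self hx) v hv).hasDerivAt
        (Icc_mem_nhds hx.1 hx.2)).hasDerivWithinAt)
      ((hD.uncurry_right v hv).intervalIntegrable_of_Icc hpq)
  rw [← sub_eq_zero, ← integral_sub hFq hFp]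
  calc ∫ v in s..t, (F q v - F p v)
      = ∫ v in s..t, ∫ x in p..q, D x v :=
        integral_congr fun v hv => (ftc v (uIcc_of_le hst ▸ hv)).symm
    _ = ∫ x in p..q, ∫ v in s..t, D x v :=
        intervalIntegral_integral_swap_of_continuousOn hpq hst hD
    _ = 0 := by
        rw [integral_congr (g := 0) fun x hx => hD_zero x (uIcc_of_le hpq ▸ hx)]
        exact integral_zero

/-- The operator `L` of the paper. -/
noncomputable def scattering (f : ℝ → ℝ) (v : ℝ) : ℝ :=
  (1 / 2) * (∫ v' in (-1 : ℝ)..1, f v') - f v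

theorem integral_scattering_mul_sub_mul_scattering_eq_zero {f g : ℝ → ℝ}
    (hf : IntervalIntegrable f volume (-1) 1) (hg : IntervalIntegrable g volume (-1) 1) :
    ∫ v in (-1 : ℝ)..1, (scattering f v * g v - f v * scattering g v) = 0 := by
  set A := ∫ v in (-1 : ℝ)..1, f v
  set B := ∫ v in (-1 : ℝ)..1, g v
  have pointwise : ∀ v, scattering f v * g v - f v * scattering g v
      = (1 / 2 * A) * g v - (1 / 2 * B) * f v := fun v => by simp only [scattering]; ring
  simp_rw [pointwise]
  rw [integral_sub (hg.const_mul _) (hf.const_mul _), intervalIntegral.integral_const_mul,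
    intervalIntegral.integral_const_mul]
  ring

structure HasContinuousPartialDerivOn (u ud : ℝ → ℝ → ℝ) (I : Set ℝ) : Prop where
  continuousOn : ContinuousOn (uncurry u) (I ×ˢ Icc (-1) 1)
  hasDerivWithinAt : ∀ x ∈ I, ∀ v ∈ Icc (-1 : ℝ) 1, HasDerivWithinAt (u · v) (ud x v) I x
  continuousOn_deriv : ContinuousOn (uncurry ud) (I ×ˢ Icc (-1) 1)

theorem HasContinuousPartialDerivOn.mono {u ud : ℝ → ℝ → ℝ} {I J : Set ℝ}
    (hu : HasContinuousPartialDerivOn u ud I) (hJI : J ⊆ I) :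
    HasContinuousPartialDerivOn u ud J where
  continuousOn := hu.continuousOn.mono (prod_mono hJI subset_rfl)
  hasDerivWithinAt x hx v hv := (hu.hasDerivWithinAt x (hJI hx) v hv).mono hJI
  continuousOn_deriv := hu.continuousOn_deriv.mono (prod_mono hJI subset_rfl)

theorem integral_mul_mul_eq_sub_integral_abs_mul_mul {f g : ℝ → ℝ}
    (hf : ContinuousOn f (Icc (-1) 1)) (hg : ContinuousOn g (Icc (-1) 1)) :
    ∫ v in (-1 : ℝ)..1, v * f v * g v
      = (∫ v in (0 : ℝ)..1, v * f v * g v) - ∫ v in (-1 : ℝ)..0, |v| * f v * g v := by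
  have hint : ∀ {s t : ℝ}, -1 ≤ s → s ≤ t → t ≤ 1 →
      IntervalIntegrable (fun v => v * f v * g v) volume s t := fun hs hst ht =>
    (((continuousOn_id.mul hf).mul hg).mono (Icc_subset_Icc hs ht)).intervalIntegrable_of_Icc hst
  have hneg : ∫ v in (-1 : ℝ)..0, |v| * f v * g v = -∫ v in (-1 : ℝ)..0, v * f v * g v := by
    rw [← intervalIntegral.integral_neg]
    refine integral_congr_Ioo_of_le (by norm_num) fun v hv => ?_
    simp only [abs_of_neg hv.2]
    ring
  rw [hneg, ← integral_add_adjacent_intervals (hint le_rfl (by norm_num) (by norm_num))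
    (hint (by norm_num) zero_le_one le_rfl)]
  ring

section Flux

variable {p q : ℝ} {κ : ℝ → ℝ} {u w ud wd : ℝ → ℝ → ℝ}

theorem integral_flux_eq_of_rte (hpq : p ≤ q)
    (hu : HasContinuousPartialDerivOn u ud (Icc p q))
    (hw : HasContinuousPartialDerivOn w wd (Icc p q))
    (hu_rte : ∀ x ∈ Icc p q, ∀ v ∈ Icc (-1 : ℝ) 1, v * ud x v = κ x * scattering (u x) v)
    (hw_rte : ∀ x ∈ Icc p q, ∀ v ∈ Icc (-1 : ℝ) 1, -v * wd x v = κ x * scattering (w x) v) :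
    ∫ v in (-1 : ℝ)..1, v * u q v * w q v = ∫ v in (-1 : ℝ)..1, v * u p v * w p v := by
  let D : ℝ → ℝ → ℝ := fun x v => v * ud x v * w x v + v * u x v * wd x v
  have hD : ∀ x ∈ Icc p q, ∀ v ∈ Icc (-1 : ℝ) 1,
      HasDerivWithinAt (fun x => v * u x v * w x v) (D x v) (Icc p q) x := fun x hx v hv =>
    ((hu.hasDerivWithinAt x hx v hv).const_mul v).mul (hw.hasDerivWithinAt x hx v hv)
  have hD_cont : ContinuousOn (uncurry D) (Icc p q ×ˢ Icc (-1) 1) :=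
    ((continuousOn_snd.mul hu.continuousOn_deriv).mul hw.continuousOn).add
      ((continuousOn_snd.mul hu.continuousOn).mul hw.continuousOn_deriv)
  have hD_zero : ∀ x ∈ Icc p q, ∫ v in (-1 : ℝ)..1, D x v = 0 := fun x hx =>
    calc ∫ v in (-1 : ℝ)..1, D x v
        = ∫ v in (-1 : ℝ)..1, κ x * (scattering (u x) v * w x v - u x v * scattering (w x) v) :=
          integral_congr fun v hv => by
            rw [uIcc_of_le (by norm_num)] at hv
            linear_combination w x v * hu_rte x hx v hv - u x v * hw_rte x hx v hv
      _ = 0 := by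
          rw [intervalIntegral.integral_const_mul,
            integral_scattering_mul_sub_mul_scattering_eq_zero
              ((hu.continuousOn.uncurry_left x hx).intervalIntegrable_of_Icc (by norm_num))
              ((hw.continuousOn.uncurry_left x hx).intervalIntegrable_of_Icc (by norm_num)),
            mul_zero]
  have slice : ∀ x ∈ Icc p q,
      IntervalIntegrable (fun v => v * u x v * w x v) volume (-1) 1 := fun x hx =>
    ((continuousOn_id.mul (hu.continuousOn.uncurry_left x hx)).mul
      (hw.continuousOn.uncurry_left x hx)).intervalIntegrable_of_Icc (by norm_num)
  exact integral_eq_of_integral_partialDeriv_eq_zero hpq (by norm_num)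
    (slice p (left_mem_Icc.2 hpq)) (slice q (right_mem_Icc.2 hpq)) hD hD_cont hD_zero

theorem outflow_pairing_eq_inflow_pairing (hpq : p ≤ q)
    (hu : HasContinuousPartialDerivOn u ud (Icc p q))
    (hw : HasContinuousPartialDerivOn w wd (Icc p q))
    (hu_rte : ∀ x ∈ Icc p q, ∀ v ∈ Icc (-1 : ℝ) 1, v * ud x v = κ x * scattering (u x) v)
    (hw_rte : ∀ x ∈ Icc p q, ∀ v ∈ Icc (-1 : ℝ) 1, -v * wd x v = κ x * scattering (w x) v) :
    (∫ v in (0 : ℝ)..1, v * u q v * w q v) + ∫ v in (-1 : ℝ)..0, |v| * u p v * w p v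
      = (∫ v in (0 : ℝ)..1, v * u p v * w p v) + ∫ v in (-1 : ℝ)..0, |v| * u q v * w q v := by
  have split : ∀ x ∈ Icc p q, ∫ v in (-1 : ℝ)..1, v * u x v * w x v
      = (∫ v in (0 : ℝ)..1, v * u x v * w x v) - ∫ v in (-1 : ℝ)..0, |v| * u x v * w x v :=
    fun x hx => integral_mul_mul_eq_sub_integral_abs_mul_mul
      (hu.continuousOn.uncurry_left x hx) (hw.continuousOn.uncurry_left x hx)
  linarith [integral_flux_eq_of_rte hpq hu hw hu_rte hw_rte, split p (left_mem_Icc.2 hpq),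
    split q (right_mem_Icc.2 hpq)]

end Flux

theorem integral_mul_mul_eq_sub_of_eqOn {s t : ℝ} (hst : s ≤ t) {k f g₁ g₂ ψ : ℝ → ℝ}
    (hk : Continuous k) (hf : ContinuousOn f (Icc s t)) (hg₁ : ContinuousOn g₁ (Icc s t))
    (hg₂ : ContinuousOn g₂ (Icc s t)) (hψ : ∀ v ∈ Ioo s t, g₁ v = ψ v + g₂ v) :
    ∫ v in s..t, k v * f v * ψ v
      = (∫ v in s..t, k v * f v * g₁ v) - ∫ v in s..t, k v * f v * g₂ v := by
  have hint : ∀ g : ℝ → ℝ, ContinuousOn g (Icc s t) →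
      IntervalIntegrable (fun v => k v * f v * g v) volume s t := fun g hg =>
    ((hk.continuousOn.mul hf).mul hg).intervalIntegrable_of_Icc hst
  rw [← integral_sub (hint g₁ hg₁) (hint g₂ hg₂)]
  exact integral_congr_Ioo_of_le hst fun v hv => by
    simp only [hψ v hv]
    ring

theorem rte_boundary_to_boundary_adjoint_general (a c d b ε : ℝ)
    (hac : a < c) (hcd : c < d) (hdb : d < b)
    (σ : ℝ → ℝ)
    (u g h ud gd hd : ℝ → ℝ → ℝ) (ψ : ℝ → ℝ)
    -- regularity of u on [a,b] × [−1,1]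
    (hu_cont : ContinuousOn (fun q : ℝ × ℝ => u q.1 q.2)
      (Set.Icc a b ×ˢ Set.Icc (-1 : ℝ) 1))
    (hud : ∀ x ∈ Set.Icc a b, ∀ v ∈ Set.Icc (-1 : ℝ) 1,
      HasDerivWithinAt (fun x' => u x' v) (ud x v) (Set.Icc a b) x)
    (hud_cont : ContinuousOn (fun q : ℝ × ℝ => ud q.1 q.2)
      (Set.Icc a b ×ˢ Set.Icc (-1 : ℝ) 1))
    -- regularity of g on [c,d] × [−1,1]
    (hg_cont : ContinuousOn (fun q : ℝ × ℝ => g q.1 q.2)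
      (Set.Icc c d ×ˢ Set.Icc (-1 : ℝ) 1))
    (hgd : ∀ x ∈ Set.Icc c d, ∀ v ∈ Set.Icc (-1 : ℝ) 1,
      HasDerivWithinAt (fun x' => g x' v) (gd x v) (Set.Icc c d) x)
    (hgd_cont : ContinuousOn (fun q : ℝ × ℝ => gd q.1 q.2)
      (Set.Icc c d ×ˢ Set.Icc (-1 : ℝ) 1))
    -- regularity of h on ([a,c] ∪ [d,b]) × [−1,1]
    (hh_cont : ContinuousOn (fun q : ℝ × ℝ => h q.1 q.2)
      ((Set.Icc a c ∪ Set.Icc d b) ×ˢ Set.Icc (-1 : ℝ) 1))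
    (hhd_left : ∀ x ∈ Set.Icc a c, ∀ v ∈ Set.Icc (-1 : ℝ) 1,
      HasDerivWithinAt (fun x' => h x' v) (hd x v) (Set.Icc a c) x)
    (hhd_right : ∀ x ∈ Set.Icc d b, ∀ v ∈ Set.Icc (-1 : ℝ) 1,
      HasDerivWithinAt (fun x' => h x' v) (hd x v) (Set.Icc d b) x)
    (hhd_cont : ContinuousOn (fun q : ℝ × ℝ => hd q.1 q.2)
      ((Set.Icc a c ∪ Set.Icc d b) ×ˢ Set.Icc (-1 : ℝ) 1))
    -- (i) forward RTE for u on [a,b] × [−1,1]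
    (hpde_u : ∀ x ∈ Set.Icc a b, ∀ v ∈ Set.Icc (-1 : ℝ) 1,
      v * ud x v = (σ x / ε) * (((1 / 2) * ∫ v' in (-1 : ℝ)..1, u x v') - u x v))
    -- (ii) adjoint RTE for g on [c,d] × [−1,1] with inflow data ψ + h on Γ^s_{m,+}
    (hpde_g : ∀ x ∈ Set.Icc c d, ∀ v ∈ Set.Icc (-1 : ℝ) 1,
      -v * gd x v = (σ x / ε) * (((1 / 2) * ∫ v' in (-1 : ℝ)..1, g x v') - g x v))
    (hg_d : ∀ v ∈ Set.Ioo (0 : ℝ) 1, g d v = ψ v + h d v)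
    (hg_c : ∀ v ∈ Set.Ioo (-1 : ℝ) 0, g c v = ψ v + h c v)
    -- (iii) adjoint RTE for h on the buffer regions, with coupling and outflow conditions
    (hpde_h_left : ∀ x ∈ Set.Icc a c, ∀ v ∈ Set.Icc (-1 : ℝ) 1,
      -v * hd x v = (σ x / ε) * (((1 / 2) * ∫ v' in (-1 : ℝ)..1, h x v') - h x v))
    (hpde_h_right : ∀ x ∈ Set.Icc d b, ∀ v ∈ Set.Icc (-1 : ℝ) 1,
      -v * hd x v = (σ x / ε) * (((1 / 2) * ∫ v' in (-1 : ℝ)..1, h x v') - h x v))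
    (hh_c : ∀ v ∈ Set.Ioo (0 : ℝ) 1, h c v = g c v)
    (hh_d : ∀ v ∈ Set.Ioo (-1 : ℝ) 0, h d v = g d v)
    (hh_a : ∀ v ∈ Set.Ioo (-1 : ℝ) 0, h a v = 0)
    (hh_b : ∀ v ∈ Set.Ioo (0 : ℝ) 1, h b v = 0) :
    (∫ v in (0 : ℝ)..1, v * u d v * ψ v) + (∫ v in (-1 : ℝ)..0, |v| * u c v * ψ v)
      = (∫ v in (0 : ℝ)..1, v * u a v * h a v)
        + ∫ v in (-1 : ℝ)..0, |v| * u b v * h b v := by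
  have hu : HasContinuousPartialDerivOn u ud (Icc a b) := ⟨hu_cont, hud, hud_cont⟩
  have hg : HasContinuousPartialDerivOn g gd (Icc c d) := ⟨hg_cont, hgd, hgd_cont⟩
  have hh_left : HasContinuousPartialDerivOn h hd (Icc a c) :=
    ⟨hh_cont.mono (prod_mono subset_union_left subset_rfl), hhd_left,
      hhd_cont.mono (prod_mono subset_union_left subset_rfl)⟩
  have hh_right : HasContinuousPartialDerivOn h hd (Icc d b) :=
    ⟨hh_cont.mono (prod_mono subset_union_right subset_rfl), hhd_right,
      hhd_cont.mono (prod_mono subset_union_right subset_rfl)⟩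
  have hcd_ab : Icc c d ⊆ Icc a b := Icc_subset_Icc hac.le hdb.le
  have hac_ab : Icc a c ⊆ Icc a b := Icc_subset_Icc le_rfl (by linarith)
  have hdb_ab : Icc d b ⊆ Icc a b := Icc_subset_Icc (by linarith) le_rfl
  have green_g := outflow_pairing_eq_inflow_pairing hcd.le (hu.mono hcd_ab) hg
    (fun x hx => hpde_u x (hcd_ab hx)) hpde_g
  have green_left := outflow_pairing_eq_inflow_pairing hac.le (hu.mono hac_ab) hh_left
    (fun x hx => hpde_u x (hac_ab hx)) hpde_h_left
  have green_right := outflow_pairing_eq_inflow_pairing hdb.le (hu.mono hdb_ab) hh_right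
    (fun x hx => hpde_u x (hdb_ab hx)) hpde_h_right
  have neg_half : Icc (-1 : ℝ) 0 ⊆ Icc (-1) 1 := Icc_subset_Icc le_rfl zero_le_one
  have pos_half : Icc (0 : ℝ) 1 ⊆ Icc (-1) 1 := Icc_subset_Icc (by norm_num) le_rfl
  have hψ_d := integral_mul_mul_eq_sub_of_eqOn zero_le_one continuous_id'
    ((hu_cont.uncurry_left d (hcd_ab (right_mem_Icc.2 hcd.le))).mono pos_half)
    ((hg_cont.uncurry_left d (right_mem_Icc.2 hcd.le)).mono pos_half)
    ((hh_cont.uncurry_left d (Or.inr (left_mem_Icc.2 hdb.le))).mono pos_half) hg_d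
  have hψ_c := integral_mul_mul_eq_sub_of_eqOn (by norm_num) continuous_abs
    ((hu_cont.uncurry_left c (hcd_ab (left_mem_Icc.2 hcd.le))).mono neg_half)
    ((hg_cont.uncurry_left c (left_mem_Icc.2 hcd.le)).mono neg_half)
    ((hh_cont.uncurry_left c (Or.inl (right_mem_Icc.2 hac.le))).mono neg_half) hg_c
  have hgc_eq : ∫ v in (0 : ℝ)..1, v * u c v * g c v = ∫ v in (0 : ℝ)..1, v * u c v * h c v :=
    integral_congr_Ioo_of_le zero_le_one fun v hv => by simp only [hh_c v hv]
  have hgd_eq : ∫ v in (-1 : ℝ)..0, |v| * u d v * g d v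
      = ∫ v in (-1 : ℝ)..0, |v| * u d v * h d v :=
    integral_congr_Ioo_of_le (by norm_num) fun v hv => by simp only [hh_d v hv]
  have ha_zero : ∫ v in (-1 : ℝ)..0, |v| * u a v * h a v = 0 :=
    (integral_congr_Ioo_of_le (by norm_num) fun v hv => by simp [hh_a v hv]).trans integral_zero
  have hb_zero : ∫ v in (0 : ℝ)..1, v * u b v * h b v = 0 :=
    (integral_congr_Ioo_of_le zero_le_one fun v hv => by simp [hh_b v hv]).trans integral_zero
  linarith

/-- Adjointness of the boundary-to-boundary map, 1D form (Theorem 3.2 of the paper).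
With subdomain `(a,b)` containing the buffer-free region `(c,d)`, `u` solving the forward
RTE on `[a,b] × [−1,1]`, `g` solving the adjoint RTE on the buffer-free region
`[c,d] × [−1,1]` with inflow data `ψ + h` on `Γ^s_{m,+}`, and `h` solving the adjoint RTE
on the buffer regions `[a,c] × [−1,1]` and `[d,b] × [−1,1]` with matching data `g` on
`Γ^s_{m,−}` and vanishing data on `Γ_{m,+}`, the weighted boundary pairings agree:
`⟨P_m φ, ψ⟩_{Γ^s_{m,+}} = ⟨φ, P*_m ψ⟩_{Γ_{m,−}}`. -/
theorem rte_boundary_to_boundary_adjoint (a c d b ε : ℝ)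
    (hac : a < c) (hcd : c < d) (hdb : d < b) (hε : 0 < ε)
    (σ : ℝ → ℝ) (hσ : ContinuousOn σ (Set.Icc a b))
    (u g h ud gd hd : ℝ → ℝ → ℝ) (ψ : ℝ → ℝ)
    -- regularity of u on [a,b] × [−1,1]
    (hu_cont : ContinuousOn (fun q : ℝ × ℝ => u q.1 q.2)
      (Set.Icc a b ×ˢ Set.Icc (-1 : ℝ) 1))
    (hud : ∀ x ∈ Set.Icc a b, ∀ v ∈ Set.Icc (-1 : ℝ) 1,
      HasDerivWithinAt (fun x' => u x' v) (ud x v) (Set.Icc a b) x)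
    (hud_cont : ContinuousOn (fun q : ℝ × ℝ => ud q.1 q.2)
      (Set.Icc a b ×ˢ Set.Icc (-1 : ℝ) 1))
    -- regularity of g on [c,d] × [−1,1]
    (hg_cont : ContinuousOn (fun q : ℝ × ℝ => g q.1 q.2)
      (Set.Icc c d ×ˢ Set.Icc (-1 : ℝ) 1))
    (hgd : ∀ x ∈ Set.Icc c d, ∀ v ∈ Set.Icc (-1 : ℝ) 1,
      HasDerivWithinAt (fun x' => g x' v) (gd x v) (Set.Icc c d) x)
    (hgd_cont : ContinuousOn (fun q : ℝ × ℝ => gd q.1 q.2)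
      (Set.Icc c d ×ˢ Set.Icc (-1 : ℝ) 1))
    -- regularity of h on ([a,c] ∪ [d,b]) × [−1,1]
    (hh_cont : ContinuousOn (fun q : ℝ × ℝ => h q.1 q.2)
      ((Set.Icc a c ∪ Set.Icc d b) ×ˢ Set.Icc (-1 : ℝ) 1))
    (hhd_left : ∀ x ∈ Set.Icc a c, ∀ v ∈ Set.Icc (-1 : ℝ) 1,
      HasDerivWithinAt (fun x' => h x' v) (hd x v) (Set.Icc a c) x)
    (hhd_right : ∀ x ∈ Set.Icc d b, ∀ v ∈ Set.Icc (-1 : ℝ) 1,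
      HasDerivWithinAt (fun x' => h x' v) (hd x v) (Set.Icc d b) x)
    (hhd_cont : ContinuousOn (fun q : ℝ × ℝ => hd q.1 q.2)
      ((Set.Icc a c ∪ Set.Icc d b) ×ˢ Set.Icc (-1 : ℝ) 1))
    -- (i) forward RTE for u on [a,b] × [−1,1]
    (hpde_u : ∀ x ∈ Set.Icc a b, ∀ v ∈ Set.Icc (-1 : ℝ) 1,
      v * ud x v = (σ x / ε) * (((1 / 2) * ∫ v' in (-1 : ℝ)..1, u x v') - u x v))
    -- (ii) adjoint RTE for g on [c,d] × [−1,1] with inflow data ψ + h on Γ^s_{m,+}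
    (hpde_g : ∀ x ∈ Set.Icc c d, ∀ v ∈ Set.Icc (-1 : ℝ) 1,
      -v * gd x v = (σ x / ε) * (((1 / 2) * ∫ v' in (-1 : ℝ)..1, g x v') - g x v))
    (hg_d : ∀ v ∈ Set.Ioo (0 : ℝ) 1, g d v = ψ v + h d v)
    (hg_c : ∀ v ∈ Set.Ioo (-1 : ℝ) 0, g c v = ψ v + h c v)
    -- (iii) adjoint RTE for h on the buffer regions, with coupling and outflow conditions
    (hpde_h_left : ∀ x ∈ Set.Icc a c, ∀ v ∈ Set.Icc (-1 : ℝ) 1,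
      -v * hd x v = (σ x / ε) * (((1 / 2) * ∫ v' in (-1 : ℝ)..1, h x v') - h x v))
    (hpde_h_right : ∀ x ∈ Set.Icc d b, ∀ v ∈ Set.Icc (-1 : ℝ) 1,
      -v * hd x v = (σ x / ε) * (((1 / 2) * ∫ v' in (-1 : ℝ)..1, h x v') - h x v))
    (hh_c : ∀ v ∈ Set.Ioo (0 : ℝ) 1, h c v = g c v)
    (hh_d : ∀ v ∈ Set.Ioo (-1 : ℝ) 0, h d v = g d v)
    (hh_a : ∀ v ∈ Set.Ioo (-1 : ℝ) 0, h a v = 0)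
    (hh_b : ∀ v ∈ Set.Ioo (0 : ℝ) 1, h b v = 0) :
    (∫ v in (0 : ℝ)..1, v * u d v * ψ v) + (∫ v in (-1 : ℝ)..0, |v| * u c v * ψ v)
      = (∫ v in (0 : ℝ)..1, v * u a v * h a v)
        + ∫ v in (-1 : ℝ)..0, |v| * u b v * h b v :=
  rte_boundary_to_boundary_adjoint_general a c d b ε hac hcd hdb σ u g h ud gd hd ψ hu_cont hud
    hud_cont hg_cont hgd hgd_cont hh_cont hhd_left hhd_right hhd_cont hpde_u hpde_g hg_d hg_c
    hpde_h_left hpde_h_right hh_c hh_d hh_a hh_b
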